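/- arXiv:2104.00826 — 5 statements merged into one kernel-verified Lean document; each statement's English description precedes it below -/
import Mathlib

section
/- Let e ∈ ℝ², let ω ∈ S¹ be a unit vector making an angle in [-3π/4, -π/4] with the positive x-axis, let r > 0 and μ ∈ (0, 1/√2). Define the double sector X_{e,ω}(r, μ⁻¹) = {z ∈ ℝ² : |(z - e)·ω| ≤ μ|z - e|} ∩ B_r(e). Then every vertical slice of X_{e,ω}(r, μ⁻¹) (i.e., its intersection with any vertical line {x = c}) has one-dimensional Lebesgue measure at most √8·μ·r. -/
open MeasureTheory Real

/-!
A point `(c, y)` of the sector satisfies `|(c - e.1) ω.1 + (y - e.2) ω.2| ≤ μ r`, so along the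
vertical line `x = c` it lies in a strip of width `2μr / |ω.2|`. The angle condition on `ω`
gives `|ω.2| ≥ √2 / 2`, whence the width is at most `√8 μ r`.
-/

theorem sqrt_two_div_two_le_abs_sin {θ : ℝ} (hθ : θ ∈ Set.Icc (-(3 * π / 4)) (-(π / 4))) :
    √2 / 2 ≤ |sin θ| := by
  have h_near : |θ + π / 2| ≤ π / 4 := abs_le.2 ⟨by linarith [hθ.1], by linarith [hθ.2]⟩
  have h_cos : cos (π / 4) ≤ cos (θ + π / 2) := by
    rw [← cos_abs (θ + π / 2)]
    exact cos_le_cos_of_nonneg_of_le_pi (abs_nonneg _) (by linarith [pi_pos]) h_near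
  calc √2 / 2 = cos (π / 4) := cos_pi_div_four.symm
    _ ≤ cos (θ + π / 2) := h_cos
    _ = -sin θ := cos_add_pi_div_two θ
    _ ≤ |sin θ| := neg_le_abs _

theorem Real.volume_le_ofReal_of_forall_dist_le {s : Set ℝ} {d : ℝ}
    (h : ∀ x ∈ s, ∀ y ∈ s, dist x y ≤ d) : volume s ≤ ENNReal.ofReal d :=
  (Real.volume_le_diam s).trans <| Metric.ediam_le fun x hx y hy ↦ by
    rw [edist_dist]
    exact ENNReal.ofReal_le_ofReal (h x hx y hy)

theorem Real.volume_setOf_abs_add_sub_mul_le {a b y₀ t m : ℝ} (hm : 0 < m) (hmb : m ≤ |b|) :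
    volume {y : ℝ | |a + (y - y₀) * b| ≤ t} ≤ ENNReal.ofReal (2 * t / m) := by
  refine Real.volume_le_ofReal_of_forall_dist_le fun y₁ hy₁ y₂ hy₂ ↦ ?_
  rw [le_div_iff₀ hm, Real.dist_eq]
  calc |y₁ - y₂| * m ≤ |y₁ - y₂| * |b| := by gcongr
    _ = |(a + (y₁ - y₀) * b) - (a + (y₂ - y₀) * b)| := by rw [← abs_mul]; ring_nf
    _ ≤ |a + (y₁ - y₀) * b| + |a + (y₂ - y₀) * b| := abs_sub _ _
    _ ≤ 2 * t := by linarith [hy₁.out, hy₂.out]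

theorem two_mul_div_sqrt_two_div_two (x : ℝ) : 2 * x / (√2 / 2) = √8 * x := by
  have h8 : √8 = 2 * √2 := by
    rw [show (8 : ℝ) = 2 ^ 2 * 2 by norm_num, sqrt_mul (by norm_num), sqrt_sq (by norm_num)]
  have h2 : √2 ≠ 0 := by positivity
  rw [h8]
  field_simp
  rw [sq_sqrt (by norm_num)]
  ring

theorem vertical_slice_of_sector_general (e ω : ℝ × ℝ) (r μ : ℝ)
    (hμ : μ ∈ Set.Ioo (0 : ℝ) (1 / Real.sqrt 2))
    (hω : ∃ θ ∈ Set.Icc (-(3 * π / 4)) (-(π / 4)), ω = (Real.cos θ, Real.sin θ))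
    (c : ℝ) :
    volume {y : ℝ |
        |(c - e.1) * ω.1 + (y - e.2) * ω.2| ≤
          μ * Real.sqrt ((c - e.1) ^ 2 + (y - e.2) ^ 2) ∧
        Real.sqrt ((c - e.1) ^ 2 + (y - e.2) ^ 2) < r} ≤
      ENNReal.ofReal (Real.sqrt 8 * μ * r) := by
  obtain ⟨θ, hθ, rfl⟩ := hω
  have h_strip : {y : ℝ |
      |(c - e.1) * cos θ + (y - e.2) * sin θ| ≤ μ * √((c - e.1) ^ 2 + (y - e.2) ^ 2) ∧
        √((c - e.1) ^ 2 + (y - e.2) ^ 2) < r} ⊆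
      {y : ℝ | |(c - e.1) * cos θ + (y - e.2) * sin θ| ≤ μ * r} :=
    fun y hy ↦ hy.1.trans (mul_le_mul_of_nonneg_left hy.2.le hμ.1.le)
  calc _ ≤ _ := measure_mono h_strip
    _ ≤ ENNReal.ofReal (2 * (μ * r) / (√2 / 2)) :=
      Real.volume_setOf_abs_add_sub_mul_le (by positivity) (sqrt_two_div_two_le_abs_sin hθ)
    _ = ENNReal.ofReal (√8 * μ * r) := by rw [two_mul_div_sqrt_two_div_two, mul_assoc]

/-- Height of a straight double-sector: if `ω` is a unit vector making an angle in
`[-3π/4, -π/4]` with the positive `x`-axis, `r > 0` and `μ ∈ (0, 1/√2)`, then every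
vertical slice of the double sector `X_{e,ω}(r, μ⁻¹)` has length at most `√8·μ·r`. -/
theorem vertical_slice_of_sector (e ω : ℝ × ℝ) (r μ : ℝ) (hr : 0 < r)
    (hμ : μ ∈ Set.Ioo (0 : ℝ) (1 / Real.sqrt 2))
    (hω : ∃ θ ∈ Set.Icc (-(3 * π / 4)) (-(π / 4)), ω = (Real.cos θ, Real.sin θ))
    (c : ℝ) :
    volume {y : ℝ |
        |(c - e.1) * ω.1 + (y - e.2) * ω.2| ≤
          μ * Real.sqrt ((c - e.1) ^ 2 + (y - e.2) ^ 2) ∧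
        Real.sqrt ((c - e.1) ^ 2 + (y - e.2) ^ 2) < r} ≤
      ENNReal.ofReal (Real.sqrt 8 * μ * r) :=
  vertical_slice_of_sector_general e ω r μ hμ hω c
end

section
/- Let φ: I → ℝ be a C¹ function on a closed bounded interval I = [a,b] such that |φ'(t)| ≤ 1-δ on I for some δ ∈ (0,1), φ' is λ-bilipschitz (λ⁻¹|s-t| ≤ |φ'(s)-φ'(t)| ≤ λ|s-t| for s,t ∈ I, with λ ≥ 1). Define φ₊ on I₊ = [a-δ', b+δ'] (for δ' = δ·λ, chosen so that |φ₊'| ≤ 1) by φ₊(t) = φ(a) + φ'(a)(t-a) + (σ/(2λ))(t-a)² for t ∈ [a-δ', a], φ₊(t) = φ(t) for t ∈ [a,b], and φ₊(t) = φ(b) + φ'(b)(t-b) + (σ/(2λ))(t-b)² for t ∈ [b, b+δ'], where σ ∈ {±1} is the sign of φ''. Then φ₊ is C¹ on I₊, φ₊ is 1-Lipschitz, and φ₊' is λ-bilipschitz on I₊. -/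
/-!
The derivative of each quadratic end piece is affine with slope `σ / λ` and agrees with `φ'` at
the endpoint, so the glued function is differentiable everywhere with derivative `ψ`. Multiplying
by `σ` makes everything increasing: `σ ψ` has difference quotients in `[λ⁻¹, λ]` on `[a, b]` by
the bilipschitz and monotonicity hypotheses, and exactly `σ² / λ = λ⁻¹` on the end pieces. Such
bounds on difference quotients survive gluing intervals end to end, so `ψ` is `λ`-bilipschitz on
all of `I₊`. On an end piece `|ψ|` exceeds `|φ'| ≤ 1 - δ` at the endpoint by at most
`λ⁻¹ δ' = δ`, and the mean value theorem turns `|ψ| ≤ 1` into the Lipschitz bound for `φ₊`.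
-/

open Set

def SlopesBetweenOn (m M : ℝ) (g : ℝ → ℝ) (s : Set ℝ) : Prop :=
  ∀ x ∈ s, ∀ y ∈ s, x ≤ y → m * (y - x) ≤ g y - g x ∧ g y - g x ≤ M * (y - x)

namespace SlopesBetweenOn

variable {m M : ℝ} {g : ℝ → ℝ} {s : Set ℝ}

theorem of_sub_eq {k : ℝ} (h : ∀ x ∈ s, ∀ y ∈ s, g y - g x = k * (y - x))
    (hm : m ≤ k) (hM : k ≤ M) : SlopesBetweenOn m M g s := by
  intro x hx y hy hxy
  have hyx : 0 ≤ y - x := sub_nonneg.2 hxy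
  rw [h x hx y hy]
  exact ⟨mul_le_mul_of_nonneg_right hm hyx, mul_le_mul_of_nonneg_right hM hyx⟩

theorem of_abs_sub (hmono : MonotoneOn g s)
    (h : ∀ x ∈ s, ∀ y ∈ s, m * |x - y| ≤ |g x - g y| ∧ |g x - g y| ≤ M * |x - y|) :
    SlopesBetweenOn m M g s := by
  intro x hx y hy hxy
  have := h y hy x hx
  rwa [abs_of_nonneg (sub_nonneg.2 hxy), abs_of_nonneg (sub_nonneg.2 (hmono hx hy hxy))] at this

theorem union_Icc {x y z : ℝ} (h₁ : SlopesBetweenOn m M g (Icc x y))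
    (h₂ : SlopesBetweenOn m M g (Icc y z)) : SlopesBetweenOn m M g (Icc x z) := by
  intro s hs t ht hst
  by_cases hty : t ≤ y
  · exact h₁ s ⟨hs.1, hst.trans hty⟩ t ⟨ht.1, hty⟩ hst
  by_cases hys : y ≤ s
  · exact h₂ s ⟨hys, hs.2⟩ t ⟨hys.trans hst, ht.2⟩ hst
  have hsy : s ≤ y := (not_le.1 hys).le
  have hyt : y ≤ t := (not_le.1 hty).le
  obtain ⟨h₁l, h₁u⟩ := h₁ s ⟨hs.1, hsy⟩ y ⟨hs.1.trans hsy, le_rfl⟩ hsy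
  obtain ⟨h₂l, h₂u⟩ := h₂ y ⟨le_rfl, hyt.trans ht.2⟩ t ⟨hyt, ht.2⟩ hyt
  constructor <;> linarith

theorem abs_sub (hg : SlopesBetweenOn m M g s) (hm : 0 ≤ m) {x y : ℝ} (hx : x ∈ s)
    (hy : y ∈ s) : m * |x - y| ≤ |g x - g y| ∧ |g x - g y| ≤ M * |x - y| := by
  wlog hyx : y ≤ x generalizing x y
  · simpa only [abs_sub_comm] using this hy hx (le_of_not_ge hyx)
  obtain ⟨hl, hu⟩ := hg y hy x hx hyx
  have hg_nonneg : 0 ≤ g x - g y := (mul_nonneg hm (sub_nonneg.2 hyx)).trans hl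
  rw [abs_of_nonneg hg_nonneg, abs_of_nonneg (sub_nonneg.2 hyx)]
  exact ⟨hl, hu⟩

end SlopesBetweenOn

theorem hasDerivAt_quadratic (c₀ c₁ k x₀ t : ℝ) :
    HasDerivAt (fun x => c₀ + c₁ * (x - x₀) + k * (x - x₀) ^ 2) (c₁ + 2 * k * (t - x₀)) t := by
  have h := (hasDerivAt_id' t).sub_const x₀
  refine (((h.const_mul c₁).const_add c₀).add ((h.pow 2).const_mul k)).congr_deriv ?_
  push_cast
  ring

theorem hasDerivAt_ite_le {f g f' g' : ℝ → ℝ} {a t : ℝ}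
    (hf : t ≤ a → HasDerivAt f (f' t) t) (hg : a ≤ t → HasDerivAt g (g' t) t)
    (ha : f a = g a) (ha' : f' a = g' a) :
    HasDerivAt (fun x => if x ≤ a then f x else g x) (if t ≤ a then f' t else g' t) t := by
  rcases lt_trichotomy t a with hta | rfl | hat
  · rw [if_pos hta.le]
    refine (hf hta.le).congr_of_eventuallyEq ?_
    filter_upwards [Iio_mem_nhds hta] with x hx
    exact if_pos (le_of_lt hx)
  · rw [if_pos le_rfl]
    have hl : HasDerivWithinAt (fun x => if x ≤ t then f x else g x) (f' t) (Iic t) t :=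
      (hf le_rfl).hasDerivWithinAt.congr (fun x hx => if_pos hx) (if_pos le_rfl)
    have hr : HasDerivWithinAt (fun x => if x ≤ t then f x else g x) (f' t) (Ici t) t := by
      rw [ha']
      refine (hg le_rfl).hasDerivWithinAt.congr (fun x hx => ?_) (by simp [ha])
      split_ifs with hxt
      · rw [le_antisymm hxt hx, ha]
      · rfl
    simpa only [Iic_union_Ici, hasDerivWithinAt_univ] using hl.union hr
  · rw [if_neg (not_le.2 hat)]
    refine (hg hat.le).congr_of_eventuallyEq ?_
    filter_upwards [Ioi_mem_nhds hat] with x hx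
    exact if_neg (not_le.2 hx)

theorem abs_add_div_mul_le_one {c σ ℓ u δ : ℝ} (hc : |c| ≤ 1 - δ) (hσ : |σ| = 1) (hℓ : 0 < ℓ)
    (hu : |u| ≤ δ * ℓ) : |c + σ / ℓ * u| ≤ 1 := by
  have hu' : |σ / ℓ * u| ≤ δ := by
    rw [abs_mul, abs_div, hσ, abs_of_pos hℓ, one_div_mul_eq_div, div_le_iff₀ hℓ]
    exact hu
  linarith [abs_add_le c (σ / ℓ * u)]

section QuadraticExtension

variable (a b lam σ : ℝ) (φ φ' : ℝ → ℝ)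

noncomputable def quadraticExtension (t : ℝ) : ℝ :=
  if t ≤ a then φ a + φ' a * (t - a) + σ / (2 * lam) * (t - a) ^ 2
  else if t ≤ b then φ t
  else φ b + φ' b * (t - b) + σ / (2 * lam) * (t - b) ^ 2

noncomputable def quadraticExtensionDeriv (t : ℝ) : ℝ :=
  if t ≤ a then φ' a + σ / lam * (t - a)
  else if t ≤ b then φ' t
  else φ' b + σ / lam * (t - b)

variable {a b lam σ φ φ'}

theorem hasDerivAt_quadraticExtension (hab : a ≤ b)
    (hderiv : ∀ t ∈ Icc a b, HasDerivAt φ (φ' t) t) (t : ℝ) :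
    HasDerivAt (quadraticExtension a b lam σ φ φ') (quadraticExtensionDeriv a b lam σ φ' t) t := by
  have hquad (x₀ : ℝ) : HasDerivAt (fun x => φ x₀ + φ' x₀ * (x - x₀) +
      σ / (2 * lam) * (x - x₀) ^ 2) (φ' x₀ + σ / lam * (t - x₀)) t :=
    (hasDerivAt_quadratic _ _ _ x₀ t).congr_deriv (by ring)
  refine hasDerivAt_ite_le (f' := fun t => φ' a + σ / lam * (t - a))
    (g' := fun t => if t ≤ b then φ' t else φ' b + σ / lam * (t - b))
    (fun _ => hquad a) (fun hat => ?_) (by simp [hab]) (by simp [hab])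
  exact hasDerivAt_ite_le (f' := φ') (g' := fun t => φ' b + σ / lam * (t - b))
    (fun htb => hderiv t ⟨hat, htb⟩) (fun _ => hquad b) (by simp) (by simp)

theorem quadraticExtensionDeriv_of_le {t : ℝ} (ht : t ≤ a) :
    quadraticExtensionDeriv a b lam σ φ' t = φ' a + σ / lam * (t - a) :=
  if_pos ht

theorem quadraticExtensionDeriv_of_mem_Icc {t : ℝ} (ht : t ∈ Icc a b) :
    quadraticExtensionDeriv a b lam σ φ' t = φ' t := by
  rcases ht.1.eq_or_lt with rfl | hat
  · simp [quadraticExtensionDeriv]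
  · simp [quadraticExtensionDeriv, not_le.2 hat, ht.2]

theorem quadraticExtensionDeriv_of_ge (hab : a ≤ b) {t : ℝ} (ht : b ≤ t) :
    quadraticExtensionDeriv a b lam σ φ' t = φ' b + σ / lam * (t - b) := by
  rcases ht.eq_or_lt with rfl | hbt
  · simp [quadraticExtensionDeriv_of_mem_Icc ⟨hab, le_rfl⟩]
  · simp [quadraticExtensionDeriv, not_le.2 (hab.trans_lt hbt), not_le.2 hbt]

theorem slopesBetweenOn_quadraticExtensionDeriv (hab : a ≤ b) (hlam : 1 ≤ lam) (hσ : |σ| = 1)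
    (hmono : MonotoneOn (fun t => σ * φ' t) (Icc a b))
    (hbilip : ∀ s ∈ Icc a b, ∀ t ∈ Icc a b,
      lam⁻¹ * |s - t| ≤ |φ' s - φ' t| ∧ |φ' s - φ' t| ≤ lam * |s - t|) (c d : ℝ) :
    SlopesBetweenOn lam⁻¹ lam (fun t => σ * quadraticExtensionDeriv a b lam σ φ' t) (Icc c d) := by
  set ψ := quadraticExtensionDeriv a b lam σ φ'
  have hend (x₀ : ℝ) (s : Set ℝ) (h : ∀ t ∈ s, ψ t = φ' x₀ + σ / lam * (t - x₀)) :
      SlopesBetweenOn lam⁻¹ lam (fun t => σ * ψ t) s := by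
    refine .of_sub_eq (k := lam⁻¹) (fun x hx y hy => ?_) le_rfl
      ((inv_le_one_of_one_le₀ hlam).trans hlam)
    have hσσ : σ * σ = 1 := by rw [← abs_mul_abs_self, hσ, one_mul]
    rw [h x hx, h y hy]
    field_simp
    linear_combination (y - x) * hσσ
  have hmid : SlopesBetweenOn lam⁻¹ lam (fun t => σ * ψ t) (Icc a b) := by
    have hψ {t} (ht : t ∈ Icc a b) : ψ t = φ' t := quadraticExtensionDeriv_of_mem_Icc ht
    refine .of_abs_sub (fun s hs t ht hst => ?_) (fun s hs t ht => ?_)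
    · simpa only [hψ hs, hψ ht] using hmono hs ht hst
    · simpa only [hψ hs, hψ ht, ← mul_sub, abs_mul, hσ, one_mul] using hbilip s hs t ht
  exact (hend a _ fun t ht => quadraticExtensionDeriv_of_le ht.2).union_Icc
    (hmid.union_Icc (hend b _ fun t ht => quadraticExtensionDeriv_of_ge hab ht.1))

theorem abs_quadraticExtensionDeriv_le_one {δ : ℝ} (hab : a ≤ b) (hlam : 0 < lam) (hσ : |σ| = 1)
    (hδ : 0 ≤ δ) (hbound : ∀ t ∈ Icc a b, |φ' t| ≤ 1 - δ) {t : ℝ}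
    (ht : t ∈ Icc (a - δ * lam) (b + δ * lam)) :
    |quadraticExtensionDeriv a b lam σ φ' t| ≤ 1 := by
  by_cases hta : t ≤ a
  · rw [quadraticExtensionDeriv_of_le hta]
    refine abs_add_div_mul_le_one (hbound a ⟨le_rfl, hab⟩) hσ hlam ?_
    rw [abs_of_nonpos (by linarith)]
    linarith [ht.1]
  by_cases htb : t ≤ b
  · rw [quadraticExtensionDeriv_of_mem_Icc ⟨(not_le.1 hta).le, htb⟩]
    linarith [hbound t ⟨(not_le.1 hta).le, htb⟩]
  · rw [quadraticExtensionDeriv_of_ge hab (not_le.1 htb).le]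
    refine abs_add_div_mul_le_one (hbound b ⟨hab, le_rfl⟩) hσ hlam ?_
    rw [abs_of_nonneg (by linarith)]
    linarith [ht.2]

end QuadraticExtension

/-- Extension of the curve: given a `C¹` function `φ` on `[a,b]` with `|φ'| ≤ 1 - δ`
and `φ'` λ-bilipschitz (hence strictly monotone with direction `σ = ±1`), the
quadratic extension `φ₊` to `I₊ = [a - δ', b + δ']` with `δ' = δ·λ` is `C¹`,
`1`-Lipschitz, has `|φ₊'| ≤ 1`, and `φ₊'` is λ-bilipschitz on `I₊`. -/
theorem curve_extension (a b δ lam σ : ℝ) (hab : a < b)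
    (hδ : δ ∈ Set.Ioo (0 : ℝ) 1) (hlam : 1 ≤ lam)
    (φ φ' : ℝ → ℝ)
    (hderiv : ∀ t ∈ Set.Icc a b, HasDerivAt φ (φ' t) t)
    (hbound : ∀ t ∈ Set.Icc a b, |φ' t| ≤ 1 - δ)
    (hbilip : ∀ s ∈ Set.Icc a b, ∀ t ∈ Set.Icc a b,
      lam⁻¹ * |s - t| ≤ |φ' s - φ' t| ∧ |φ' s - φ' t| ≤ lam * |s - t|)
    (hσ : σ = 1 ∨ σ = -1)
    (hσmono : ∀ s ∈ Set.Icc a b, ∀ t ∈ Set.Icc a b, s ≤ t → σ * φ' s ≤ σ * φ' t) :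
    let δ' := δ * lam
    let φp : ℝ → ℝ := fun t =>
      if t ≤ a then φ a + φ' a * (t - a) + σ / (2 * lam) * (t - a) ^ 2
      else if t ≤ b then φ t
      else φ b + φ' b * (t - b) + σ / (2 * lam) * (t - b) ^ 2
    ∃ ψ : ℝ → ℝ,
      (∀ t ∈ Set.Icc (a - δ') (b + δ'), HasDerivAt φp (ψ t) t) ∧
      ContinuousOn ψ (Set.Icc (a - δ') (b + δ')) ∧
      LipschitzOnWith 1 φp (Set.Icc (a - δ') (b + δ')) ∧
      (∀ s ∈ Set.Icc (a - δ') (b + δ'), ∀ t ∈ Set.Icc (a - δ') (b + δ'),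
        lam⁻¹ * |s - t| ≤ |ψ s - ψ t| ∧ |ψ s - ψ t| ≤ lam * |s - t|) ∧
      (∀ t ∈ Set.Icc (a - δ') (b + δ'), |ψ t| ≤ 1) := by
  intro δ' φp
  have hσ₁ : |σ| = 1 := by rcases hσ with rfl | rfl <;> simp
  set ψ := quadraticExtensionDeriv a b lam σ φ'
  have hderivψ (t : ℝ) : HasDerivAt φp (ψ t) t := hasDerivAt_quadraticExtension hab.le hderiv t
  have hslopes := slopesBetweenOn_quadraticExtensionDeriv hab.le hlam hσ₁
    (fun s hs t ht hst => hσmono s hs t ht hst) hbilip (a - δ') (b + δ')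
  have hψ_bilip (s) (hs : s ∈ Icc (a - δ') (b + δ')) (t) (ht : t ∈ Icc (a - δ') (b + δ')) :
      lam⁻¹ * |s - t| ≤ |ψ s - ψ t| ∧ |ψ s - ψ t| ≤ lam * |s - t| := by
    simpa only [← mul_sub, abs_mul, hσ₁, one_mul] using hslopes.abs_sub (by positivity) hs ht
  have hψ_le_one (t) (ht : t ∈ Icc (a - δ') (b + δ')) : |ψ t| ≤ 1 :=
    abs_quadraticExtensionDeriv_le_one hab.le (one_pos.trans_le hlam) hσ₁ hδ.1.le hbound ht
  refine ⟨ψ, fun t _ => hderivψ t, ?_, ?_, hψ_bilip, hψ_le_one⟩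
  · refine (LipschitzOnWith.of_dist_le' (K := lam) fun s hs t ht => ?_).continuousOn
    simpa only [Real.dist_eq] using (hψ_bilip s hs t ht).2
  · refine (convex_Icc _ _).lipschitzOnWith_of_nnnorm_hasDerivWithin_le
      (fun t _ => (hderivψ t).hasDerivWithinAt) fun t ht => ?_
    rw [← NNReal.coe_le_coe, coe_nnnorm, Real.norm_eq_abs, NNReal.coe_one]
    exact hψ_le_one t ht
end

section
/- Let (ω₁, ω₂) be an orthonormal basis of ℝ², w > 0, K ≥ 0, c > 0, and let S ⊆ ℝ² be a set of points such that for all y, z ∈ S: |(y - z)·ω₁| ≤ K·|(y - z)·ω₂| + c. Suppose y₁, ..., y_N ∈ S have increasing ω₂-coordinates with consecutive gaps at least w, and every point z ∈ S satisfies dist(z·ω₂, {y_i·ω₂ : i}) ≤ 2w (i.e., z lies within 2w in the ω₂-coordinate of some node). Let F be the piecewise linear interpolant through (y_i·ω₂, y_i·ω₁) (constant outside the node range). Then every z ∈ S satisfies |F(z·ω₂) - z·ω₁| ≤ 2w·(2K + c/w) + c. -/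
/-!
Write `s j = y j · ω₂` and `v j = y j · ω₁`, and let `L = K + c / w`. The cone condition between
consecutive nodes, whose `ω₂`-gap is at least `w`, absorbs the additive error into the slope:
`|v (j+1) - v j| ≤ L (s (j+1) - s j)`. Hence every piece of `F` has slope at most `L`, and chaining
through the nodes gives `|F t - v i| ≤ L |t - s i|` for every node `i`. For `z ∈ S` pick a node `i`
with `|z · ω₂ - s i| ≤ 2w`; the cone condition between `z` and `y i` bounds `|v i - z · ω₁|` by
`2wK + c`, and the triangle inequality finishes.
-/

open Set

def dotp (p q : ℝ × ℝ) : ℝ := p.1 * q.1 + p.2 * q.2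

theorem dotp_sub (a b ω : ℝ × ℝ) : dotp (a - b) ω = dotp a ω - dotp b ω := by
  simp only [dotp, Prod.fst_sub, Prod.snd_sub]
  ring

theorem abs_le_add_div_mul_of_cone {d e K c w : ℝ} (hw : 0 < w) (hc : 0 ≤ c)
    (hcone : |e| ≤ K * |d| + c) (hgap : w ≤ d) : |e| ≤ (K + c / w) * d := by
  have hc_le : c ≤ c / w * d := by
    rw [div_mul_eq_mul_div, le_div_iff₀ hw]
    exact mul_le_mul_of_nonneg_left hgap hc
  rw [abs_of_pos (hw.trans_le hgap)] at hcone
  linarith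

theorem abs_sub_le_mul_sub_of_forall_succ {s v : ℕ → ℝ} {L : ℝ} {n : ℕ}
    (h : ∀ j, j + 1 < n → |v (j + 1) - v j| ≤ L * (s (j + 1) - s j))
    {j k : ℕ} (hjk : j ≤ k) (hk : k < n) : |v k - v j| ≤ L * (s k - s j) := by
  induction k, hjk using Nat.le_induction with
  | base => simp
  | succ k _ ih =>
    calc |v (k + 1) - v j| ≤ |v (k + 1) - v k| + |v k - v j| := abs_sub_le _ _ _
      _ ≤ L * (s (k + 1) - s k) + L * (s k - s j) := add_le_add (h k hk) (ih (by omega))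
      _ = L * (s (k + 1) - s j) := by ring

theorem le_or_le_or_exists_mem_Icc {α : Type*} [LinearOrder α] (s : ℕ → α) (t : α) (n : ℕ) :
    t ≤ s 0 ∨ s n ≤ t ∨ ∃ j < n, t ∈ Icc (s j) (s (j + 1)) := by
  induction n with
  | zero => exact (le_total t (s 0)).imp_right Or.inl
  | succ n ih =>
    rcases ih with h | h | ⟨j, hj, ht⟩
    · exact Or.inl h
    · rcases le_total (s (n + 1)) t with h' | h'
      · exact Or.inr (Or.inl h')
      · exact Or.inr (Or.inr ⟨n, n.lt_succ_self, h, h'⟩)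
    · exact Or.inr (Or.inr ⟨j, hj.trans n.lt_succ_self, ht⟩)

theorem abs_sub_le_mul_abs_sub_trans {a b c x y z L : ℝ} (hL : 0 ≤ L)
    (hab : |a - b| ≤ L * (x - y)) (hbc : |b - c| ≤ L * (y - z)) : |a - c| ≤ L * |x - z| :=
  calc |a - c| ≤ |a - b| + |b - c| := abs_sub_le _ _ _
    _ ≤ L * (x - y) + L * (y - z) := add_le_add hab hbc
    _ = L * (x - z) := by ring
    _ ≤ L * |x - z| := mul_le_mul_of_nonneg_left (le_abs_self _) hL

theorem abs_linear_interp_sub_le {a b p q L t : ℝ} (hab : a < b) (hpq : |q - p| ≤ L * (b - a))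
    (ht : t ∈ Icc a b) :
    |p + (q - p) / (b - a) * (t - a) - p| ≤ L * (t - a) ∧
      |q - (p + (q - p) / (b - a) * (t - a))| ≤ L * (b - t) := by
  have hba : 0 < b - a := sub_pos.2 hab
  have hslope : |(q - p) / (b - a)| ≤ L := by
    rwa [abs_div, abs_of_pos hba, div_le_iff₀ hba]
  have hright : q - (p + (q - p) / (b - a) * (t - a)) = (q - p) / (b - a) * (b - t) := by
    field_simp
    ring
  constructor
  · rw [add_sub_cancel_left, abs_mul, abs_of_nonneg (sub_nonneg.2 ht.1)]
    exact mul_le_mul_of_nonneg_right hslope (sub_nonneg.2 ht.1)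
  · rw [hright, abs_mul, abs_of_nonneg (sub_nonneg.2 ht.2)]
    exact mul_le_mul_of_nonneg_right hslope (sub_nonneg.2 ht.2)

structure IsPiecewiseLinearInterpolant (s v : ℕ → ℝ) (n : ℕ) (F : ℝ → ℝ) : Prop where
  eq_of_le_left : ∀ t ≤ s 0, F t = v 0
  eq_of_right_le : ∀ t, s (n - 1) ≤ t → F t = v (n - 1)
  eq_of_mem_Icc : ∀ j, j + 1 < n → ∀ t ∈ Icc (s j) (s (j + 1)),
    F t = v j + (v (j + 1) - v j) / (s (j + 1) - s j) * (t - s j)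

theorem IsPiecewiseLinearInterpolant.abs_sub_le {s v : ℕ → ℝ} {n : ℕ} {F : ℝ → ℝ} {L : ℝ}
    (hF : IsPiecewiseLinearInterpolant s v n F) (hL : 0 ≤ L)
    (hs : ∀ j, j + 1 < n → s j < s (j + 1))
    (hslope : ∀ j, j + 1 < n → |v (j + 1) - v j| ≤ L * (s (j + 1) - s j))
    (t : ℝ) {i : ℕ} (hi : i < n) : |F t - v i| ≤ L * |t - s i| := by
  have hchain {j k : ℕ} (hjk : j ≤ k) (hk : k < n) : |v k - v j| ≤ L * (s k - s j) :=
    abs_sub_le_mul_sub_of_forall_succ hslope hjk hk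
  rcases le_or_le_or_exists_mem_Icc s t (n - 1) with ht | ht | ⟨j, hj, ht⟩
  · rw [hF.eq_of_le_left t ht, abs_sub_comm, abs_sub_comm t]
    refine abs_sub_le_mul_abs_sub_trans hL (hchain i.zero_le hi) ?_
    simpa using mul_nonneg hL (sub_nonneg.2 ht)
  · rw [hF.eq_of_right_le t ht]
    refine abs_sub_le_mul_abs_sub_trans hL ?_ (hchain (by omega : i ≤ n - 1) (by omega))
    simpa using mul_nonneg hL (sub_nonneg.2 ht)
  · have hj' : j + 1 < n := by omega
    obtain ⟨hleft, hright⟩ := abs_linear_interp_sub_le (hs j hj') (hslope j hj') ht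
    rw [hF.eq_of_mem_Icc j hj' t ht]
    -- go through the endpoint of the piece that lies between `t` and `s i`
    rcases le_or_gt i j with hij | hji
    · exact abs_sub_le_mul_abs_sub_trans hL hleft (hchain hij (by omega))
    · rw [abs_sub_comm, abs_sub_comm t]
      exact abs_sub_le_mul_abs_sub_trans hL (hchain hji hi) hright

theorem graph_neighborhood_containment_general (ω₁ ω₂ : ℝ × ℝ)
    (S : Set (ℝ × ℝ)) (w K c : ℝ) (hw : 0 < w) (hK : 0 ≤ K) (hc : 0 < c)
    (hcone : ∀ y ∈ S, ∀ z ∈ S, |dotp (y - z) ω₁| ≤ K * |dotp (y - z) ω₂| + c)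
    (n : ℕ) (y : ℕ → ℝ × ℝ) (hyS : ∀ i, i < n → y i ∈ S)
    (hgap : ∀ i, i + 1 < n → w ≤ dotp (y (i + 1) - y i) ω₂)
    (hnear : ∀ z ∈ S, ∃ i, i < n ∧ |dotp z ω₂ - dotp (y i) ω₂| ≤ 2 * w)
    (F : ℝ → ℝ)
    (hF₁ : ∀ s ≤ dotp (y 0) ω₂, F s = dotp (y 0) ω₁)
    (hF₂ : ∀ s, dotp (y (n - 1)) ω₂ ≤ s → F s = dotp (y (n - 1)) ω₁)
    (hF₃ : ∀ i, i + 1 < n → ∀ s ∈ Set.Icc (dotp (y i) ω₂) (dotp (y (i + 1)) ω₂),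
      F s = dotp (y i) ω₁ +
        dotp (y (i + 1) - y i) ω₁ / dotp (y (i + 1) - y i) ω₂ * (s - dotp (y i) ω₂)) :
    ∀ z ∈ S, |F (dotp z ω₂) - dotp z ω₁| ≤ 2 * w * (2 * K + c / w) + c := by
  intro z hz
  obtain ⟨i, hi, hzi⟩ := hnear z hz
  have hF : IsPiecewiseLinearInterpolant (fun j => dotp (y j) ω₂) (fun j => dotp (y j) ω₁) n F :=
    ⟨hF₁, hF₂, fun j hj t ht => by simpa only [dotp_sub] using hF₃ j hj t ht⟩
  have hgap' : ∀ j, j + 1 < n → w ≤ dotp (y (j + 1)) ω₂ - dotp (y j) ω₂ := fun j hj => by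
    simpa only [dotp_sub] using hgap j hj
  have hgraph := hF.abs_sub_le (L := K + c / w) (by positivity)
    (fun j hj => sub_pos.1 (hw.trans_le (hgap' j hj)))
    (fun j hj => abs_le_add_div_mul_of_cone hw hc.le
      (by simpa only [dotp_sub] using hcone _ (hyS _ hj) _ (hyS j (by omega))) (hgap' j hj))
    (dotp z ω₂) hi
  have hcone_i := hcone (y i) (hyS i hi) z hz
  rw [dotp_sub, dotp_sub, abs_sub_comm (dotp (y i) ω₂)] at hcone_i
  calc |F (dotp z ω₂) - dotp z ω₁|
      ≤ |F (dotp z ω₂) - dotp (y i) ω₁| + |dotp (y i) ω₁ - dotp z ω₁| := abs_sub_le _ _ _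
    _ ≤ (K + c / w) * (2 * w) + (K * (2 * w) + c) := by
      gcongr
      · exact hgraph.trans (by gcongr)
      · exact hcone_i.trans (by gcongr)
    _ = 2 * w * (2 * K + c / w) + c := by field_simp; ring

/-- Neighborhood containment: if all pairs of points of `S` satisfy the cone
condition `|(y - z)·ω₁| ≤ K|(y - z)·ω₂| + c`, the nodes `y_i ∈ S` have increasing
`ω₂`-coordinates with gaps at least `w`, every point of `S` is within `2w` in the
`ω₂`-coordinate of a node, and `F` is the piecewise linear interpolant through the
nodes, then every `z ∈ S` satisfies `|F(z·ω₂) - z·ω₁| ≤ 2w(2K + c/w) + c`. -/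
theorem graph_neighborhood_containment (ω₁ ω₂ : ℝ × ℝ)
    (h1 : dotp ω₁ ω₁ = 1) (h2 : dotp ω₂ ω₂ = 1) (h12 : dotp ω₁ ω₂ = 0)
    (S : Set (ℝ × ℝ)) (w K c : ℝ) (hw : 0 < w) (hK : 0 ≤ K) (hc : 0 < c)
    (hcone : ∀ y ∈ S, ∀ z ∈ S, |dotp (y - z) ω₁| ≤ K * |dotp (y - z) ω₂| + c)
    (n : ℕ) (hn : 1 ≤ n) (y : ℕ → ℝ × ℝ) (hyS : ∀ i, i < n → y i ∈ S)
    (hgap : ∀ i, i + 1 < n → w ≤ dotp (y (i + 1) - y i) ω₂)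
    (hnear : ∀ z ∈ S, ∃ i, i < n ∧ |dotp z ω₂ - dotp (y i) ω₂| ≤ 2 * w)
    (F : ℝ → ℝ)
    (hF₁ : ∀ s ≤ dotp (y 0) ω₂, F s = dotp (y 0) ω₁)
    (hF₂ : ∀ s, dotp (y (n - 1)) ω₂ ≤ s → F s = dotp (y (n - 1)) ω₁)
    (hF₃ : ∀ i, i + 1 < n → ∀ s ∈ Set.Icc (dotp (y i) ω₂) (dotp (y (i + 1)) ω₂),
      F s = dotp (y i) ω₁ +
        dotp (y (i + 1) - y i) ω₁ / dotp (y (i + 1) - y i) ω₂ * (s - dotp (y i) ω₂)) :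
    ∀ z ∈ S, |F (dotp z ω₂) - dotp z ω₁| ≤ 2 * w * (2 * K + c / w) + c :=
  graph_neighborhood_containment_general ω₁ ω₂ S w K c hw hK hc hcone n y hyS hgap hnear F hF₁ hF₂
    hF₃
end

section
/- Let (e,α) be admissible, ω the unit normal to C_{e,α} at e, and suppose 1/M + r < min{1/(√2·λ), δ}. Then the curve double sector 𝒳_{e,α}(r, M) is contained in the curve strip Φ_{α,+}^{-1}(J), where J = [Φ_α(e) - √8·λ(1/M + r)r, Φ_α(e) + √8·λ(1/M + r)r]. -/
/-!
Inside the sector, `z` lies on the translate `x ↦ e.2 - φ(e.1 - α') + φ(x - α')` of the curve,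
so the projected distance `|Φ_α(z) - Φ_α(e)|` is the increment between `e.1` and `z.1` of the
difference of the two translates of `φ` by `α` and `α'`. By the mean value theorem that
difference is `λ|α - α'|`-Lipschitz, which gives the bound `λ r / M`, already smaller than
`√8·λ(1/M + r)r`.
-/

open Set

theorem norm_sub_translates_sub_le_of_lipschitz_deriv {E : Type*} [NormedAddCommGroup E]
    [NormedSpace ℝ E] {f f' : ℝ → E} {L : ℝ} (hf : ∀ t, HasDerivAt f (f' t) t)
    (hf' : ∀ s t, ‖f' s - f' t‖ ≤ L * |s - t|) (a b x y : ℝ) :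
    ‖(f (x - a) - f (x - b)) - (f (y - a) - f (y - b))‖ ≤ L * |a - b| * |x - y| := by
  have hderiv : ∀ u, HasDerivAt (fun u => f (u - a) - f (u - b)) (f' (u - a) - f' (u - b)) u :=
    fun u => ((hf (u - a)).comp_sub_const u a).sub ((hf (u - b)).comp_sub_const u b)
  have hbound : ∀ u ∈ univ, ‖f' (u - a) - f' (u - b)‖ ≤ L * |a - b| := fun u _ => by
    simpa [abs_sub_comm a b] using hf' (u - a) (u - b)
  exact convex_univ.norm_image_sub_le_of_norm_hasDerivWithin_le
    (fun u _ => (hderiv u).hasDerivWithinAt) hbound (mem_univ y) (mem_univ x)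

theorem curve_sector_subset_curve_strip_general (φp ψ : ℝ → ℝ) (lam : ℝ)
    (hderiv : ∀ t, HasDerivAt φp (ψ t) t)
    (hlip : ∀ s t : ℝ, |ψ s - ψ t| ≤ lam * |s - t|)
    (e : ℝ × ℝ) (α M r : ℝ)
    (z : ℝ × ℝ) (α' t : ℝ) (hα' : |α - α'| ≤ 1 / M)
    (hz : z = (α' + t, (e.2 - φp (e.1 - α')) + φp t))
    (hzr : Real.sqrt ((z.1 - e.1) ^ 2 + (z.2 - e.2) ^ 2) ≤ r) :
    |(z.2 - φp (z.1 - α)) - (e.2 - φp (e.1 - α))| ≤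
      Real.sqrt 8 * lam * (1 / M + r) * r := by
  have hlam : 0 ≤ lam := by simpa using (abs_nonneg _).trans (hlip 1 0)
  have hx : |z.1 - e.1| ≤ r :=
    (Real.abs_le_sqrt (le_add_of_nonneg_right (sq_nonneg _))).trans hzr
  have hr : 0 ≤ r := (abs_nonneg _).trans hx
  have hM : 0 ≤ 1 / M := (abs_nonneg _).trans hα'
  have hsqrt8 : 1 ≤ Real.sqrt 8 := Real.one_le_sqrt.mpr (by norm_num)
  have hshift := norm_sub_translates_sub_le_of_lipschitz_deriv hderiv hlip α' α z.1 e.1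
  subst hz
  calc |(e.2 - φp (e.1 - α') + φp t - φp (α' + t - α)) - (e.2 - φp (e.1 - α))|
      = |(φp (α' + t - α') - φp (α' + t - α)) - (φp (e.1 - α') - φp (e.1 - α))| := by
        ring_nf
    _ ≤ lam * |α' - α| * |α' + t - e.1| := hshift
    _ ≤ lam * (1 / M) * r := by rw [abs_sub_comm α' α]; gcongr
    _ ≤ lam * (1 / M + r) * r := by gcongr; linarith
    _ ≤ Real.sqrt 8 * lam * (1 / M + r) * r := by
        rw [mul_assoc _ lam, mul_assoc _ (lam * _)]
        exact le_mul_of_one_le_left (by positivity) hsqrt8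

/-- Curve strips contain curve double-sectors: if `1/M + r < min{1/(√2·λ), δ}`,
every point `z` of the curve double sector `𝒳_{e,α}(r, M)` satisfies
`|Φ_α(z) - Φ_α(e)| ≤ √8·λ(1/M + r)r`, i.e. `𝒳_{e,α}(r, M) ⊆ Φ_{α,+}^{-1}(J)` for
the interval `J` of radius `√8·λ(1/M + r)r` centered at `Φ_α(e)`. -/
theorem curve_sector_subset_curve_strip (φp ψ : ℝ → ℝ) (lam δ : ℝ) (hlam : 1 ≤ lam)
    (hderiv : ∀ t, HasDerivAt φp (ψ t) t)
    (hψ1 : ∀ t, |ψ t| ≤ 1)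
    (hlip : ∀ s t : ℝ, |ψ s - ψ t| ≤ lam * |s - t|)
    (e : ℝ × ℝ) (α M r : ℝ) (hM : 0 < M) (hr : 0 < r)
    (hsmall : 1 / M + r < min (1 / (Real.sqrt 2 * lam)) δ)
    (z : ℝ × ℝ) (α' t : ℝ) (hα' : |α - α'| ≤ 1 / M)
    (hz : z = (α' + t, (e.2 - φp (e.1 - α')) + φp t))
    (hzr : Real.sqrt ((z.1 - e.1) ^ 2 + (z.2 - e.2) ^ 2) ≤ r) :
    |(z.2 - φp (z.1 - α)) - (e.2 - φp (e.1 - α))| ≤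
      Real.sqrt 8 * lam * (1 / M + r) * r :=
  curve_sector_subset_curve_strip_general φp ψ lam hderiv hlip e α M r z α' t hα' hz hzr
end

section
/- Let λ ≥ 1, let φ' be λ-Lipschitz with |φ'| ≤ 1, let x, y, z ∈ ℝ² with |x₁ - y₁|, |x₁ - z₁| ≤ 2ρ, and let ω₁^x = (1, φ'(x₁-α))/√(1+φ'(x₁-α)²), ω₂^x its clockwise π/2-rotation, and similarly ω₁^y, ω₂^y at y. Suppose |(y-z)·ω₁^y| ≤ K|(y-z)·ω₂^y| + c where K = λM/50 and c = r/30 for parameters M, r > 0. If 2λρ(λM/35 + 1) ≤ min{1/2, λM/100}, then |(y-z)·ω₁^x| ≤ (λM/10)|(y-z)·ω₂^x| + r/10. -/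
/-- `(unitTangent a, unitNormal a)` is the frame `(ω₁, ω₂)` at a point `x` with `ψ (x.1 - α) = a`. -/
noncomputable def unitTangent (a : ℝ) : ℝ × ℝ := (1 / √(1 + a ^ 2), a / √(1 + a ^ 2))

noncomputable def unitNormal (a : ℝ) : ℝ × ℝ := (a / √(1 + a ^ 2), -1 / √(1 + a ^ 2))

lemma dotp_comm (p q : ℝ × ℝ) : dotp p q = dotp q p := by
  unfold dotp; ring

lemma abs_dotp_le_one_of_unit {p q : ℝ × ℝ} (hp : dotp p p = 1) (hq : dotp q q = 1) :
    |dotp p q| ≤ 1 := by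
  unfold dotp at *
  rw [abs_le]
  constructor <;>
    nlinarith [sq_nonneg (p.1 + q.1), sq_nonneg (p.2 + q.2), sq_nonneg (p.1 - q.1),
      sq_nonneg (p.2 - q.2)]

lemma sq_sqrt_one_add_sq (a : ℝ) : √(1 + a ^ 2) ^ 2 = 1 + a ^ 2 :=
  Real.sq_sqrt (by positivity)

lemma one_le_sqrt_one_add_sq (a : ℝ) : 1 ≤ √(1 + a ^ 2) :=
  Real.one_le_sqrt.mpr (by nlinarith [sq_nonneg a])

lemma dotp_unitTangent_self (a : ℝ) : dotp (unitTangent a) (unitTangent a) = 1 := by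
  have := one_le_sqrt_one_add_sq a
  simp only [dotp, unitTangent]
  field_simp
  linarith [sq_sqrt_one_add_sq a]

lemma dotp_unitNormal_self (a : ℝ) : dotp (unitNormal a) (unitNormal a) = 1 := by
  have := one_le_sqrt_one_add_sq a
  simp only [dotp, unitNormal]
  field_simp
  linarith [sq_sqrt_one_add_sq a]

lemma dotp_unitTangent_unitNormal (a b : ℝ) :
    dotp (unitTangent a) (unitNormal b) = (b - a) / (√(1 + a ^ 2) * √(1 + b ^ 2)) := by
  have := one_le_sqrt_one_add_sq a
  have := one_le_sqrt_one_add_sq b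
  simp only [dotp, unitTangent, unitNormal]
  field_simp
  ring

lemma abs_dotp_unitTangent_unitNormal_le (a b : ℝ) :
    |dotp (unitTangent a) (unitNormal b)| ≤ |a - b| := by
  have h := one_le_mul_of_one_le_of_one_le (one_le_sqrt_one_add_sq a) (one_le_sqrt_one_add_sq b)
  rw [dotp_unitTangent_unitNormal, abs_div, abs_of_pos (zero_lt_one.trans_le h), abs_sub_comm]
  exact div_le_self (abs_nonneg _) h

lemma dotp_eq_unitTangent_add_unitNormal (v e : ℝ × ℝ) (b : ℝ) :
    dotp v e = dotp v (unitTangent b) * dotp e (unitTangent b) +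
      dotp v (unitNormal b) * dotp e (unitNormal b) := by
  have := one_le_sqrt_one_add_sq b
  simp only [dotp, unitTangent, unitNormal]
  field_simp
  linear_combination (v.1 * e.1 + v.2 * e.2) * sq_sqrt_one_add_sq b

lemma abs_dotp_le_of_frame (v e : ℝ × ℝ) (b : ℝ) :
    |dotp v e| ≤ |dotp v (unitTangent b)| * |dotp e (unitTangent b)| +
      |dotp v (unitNormal b)| * |dotp e (unitNormal b)| := by
  rw [dotp_eq_unitTangent_add_unitNormal v e b, ← abs_mul, ← abs_mul]
  exact abs_add_le _ _

lemma abs_dotp_unitTangent_le (v : ℝ × ℝ) (a b : ℝ) :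
    |dotp v (unitTangent a)| ≤ |dotp v (unitTangent b)| + |a - b| * |dotp v (unitNormal b)| := by
  have h₁ := abs_dotp_le_one_of_unit (dotp_unitTangent_self a) (dotp_unitTangent_self b)
  have h₂ := abs_dotp_unitTangent_unitNormal_le a b
  calc |dotp v (unitTangent a)|
      ≤ |dotp v (unitTangent b)| * |dotp (unitTangent a) (unitTangent b)| +
          |dotp v (unitNormal b)| * |dotp (unitTangent a) (unitNormal b)| :=
        abs_dotp_le_of_frame _ _ b
    _ ≤ |dotp v (unitTangent b)| * 1 + |dotp v (unitNormal b)| * |a - b| := by gcongr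
    _ = _ := by ring

lemma abs_dotp_unitNormal_le (v : ℝ × ℝ) (a b : ℝ) :
    |dotp v (unitNormal b)| ≤ |dotp v (unitNormal a)| + |a - b| * |dotp v (unitTangent a)| := by
  have h₁ := abs_dotp_le_one_of_unit (dotp_unitNormal_self b) (dotp_unitNormal_self a)
  have h₂ := abs_dotp_unitTangent_unitNormal_le a b
  rw [dotp_comm] at h₂
  calc |dotp v (unitNormal b)|
      ≤ |dotp v (unitTangent a)| * |dotp (unitNormal b) (unitTangent a)| +
          |dotp v (unitNormal a)| * |dotp (unitNormal b) (unitNormal a)| :=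
        abs_dotp_le_of_frame _ _ a
    _ ≤ |dotp v (unitTangent a)| * |a - b| + |dotp v (unitNormal a)| * 1 := by gcongr
    _ = _ := by ring

lemma le_of_cone_of_perturbation {A A' B B' K ε c : ℝ} (hA : 0 ≤ A) (hKε : 0 ≤ K + ε)
    (hsmall : (K + ε) * ε ≤ 1 / 2) (hcone : A' ≤ K * B' + c)
    (hA' : A ≤ A' + ε * B') (hB' : B' ≤ B + ε * A) :
    A ≤ 2 * (K + ε) * B + 2 * c := by
  have h : A ≤ (K + ε) * B + (K + ε) * ε * A + c := by
    nlinarith [mul_le_mul_of_nonneg_left hB' hKε]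
  nlinarith [mul_le_mul_of_nonneg_right hsmall hA]

theorem cone_change_of_basis_general (ψ : ℝ → ℝ) (lam : ℝ) (hlam : 1 ≤ lam)
    (hlip : ∀ s t : ℝ, |ψ s - ψ t| ≤ lam * |s - t|)
    (α ρ M r : ℝ) (hM : 0 < M) (hr : 0 < r)
    (x y z : ℝ × ℝ) (hxy : |x.1 - y.1| ≤ 2 * ρ)
    (hsmall : 2 * lam * ρ * (lam * M / 35 + 1) ≤ min (1 / 2) (lam * M / 100))
    (hcone : |dotp (y - z) (1 / Real.sqrt (1 + ψ (y.1 - α) ^ 2),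
        ψ (y.1 - α) / Real.sqrt (1 + ψ (y.1 - α) ^ 2))| ≤
      lam * M / 50 * |dotp (y - z) (ψ (y.1 - α) / Real.sqrt (1 + ψ (y.1 - α) ^ 2),
        -1 / Real.sqrt (1 + ψ (y.1 - α) ^ 2))| + r / 30) :
    |dotp (y - z) (1 / Real.sqrt (1 + ψ (x.1 - α) ^ 2),
        ψ (x.1 - α) / Real.sqrt (1 + ψ (x.1 - α) ^ 2))| ≤
      lam * M / 10 * |dotp (y - z) (ψ (x.1 - α) / Real.sqrt (1 + ψ (x.1 - α) ^ 2),
        -1 / Real.sqrt (1 + ψ (x.1 - α) ^ 2))| + r / 10 := by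
  set a := ψ (x.1 - α)
  set b := ψ (y.1 - α)
  obtain ⟨hsmall₁, hsmall₂⟩ := le_min_iff.mp hsmall
  have hab : |a - b| ≤ 2 * lam * ρ :=
    calc |a - b| ≤ lam * |(x.1 - α) - (y.1 - α)| := hlip _ _
      _ = lam * |x.1 - y.1| := by ring_nf
      _ ≤ lam * (2 * ρ) := by gcongr
      _ = 2 * lam * ρ := by ring
  have hK : 0 ≤ lam * M := by positivity
  have hδ : 2 * lam * ρ ≤ 1 / 2 := by nlinarith [abs_nonneg (a - b)]
  have hδK : 2 * lam * ρ ≤ lam * M / 100 := by nlinarith [abs_nonneg (a - b)]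
  have habsorb : (lam * M / 50 + |a - b|) * |a - b| ≤ 1 / 2 :=
    calc (lam * M / 50 + |a - b|) * |a - b|
        ≤ (lam * M / 35 + 1) * (2 * lam * ρ) := by gcongr <;> linarith
      _ ≤ 1 / 2 := by linarith
  have key := le_of_cone_of_perturbation (abs_nonneg _) (by positivity) habsorb hcone
    (abs_dotp_unitTangent_le (y - z) a b) (abs_dotp_unitNormal_le (y - z) a b)
  change |dotp (y - z) (unitTangent a)| ≤ lam * M / 10 * |dotp (y - z) (unitNormal a)| + r / 10
  calc |dotp (y - z) (unitTangent a)|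
      ≤ 2 * (lam * M / 50 + |a - b|) * |dotp (y - z) (unitNormal a)| + 2 * (r / 30) := key
    _ ≤ lam * M / 10 * |dotp (y - z) (unitNormal a)| + r / 10 := by
      gcongr ?_ * _ + ?_ <;> linarith

/-- Change-of-basis stability of cone conditions: with tangent/normal frames
`(ω₁ˣ, ω₂ˣ)` at `x` and `(ω₁ʸ, ω₂ʸ)` at `y` built from the λ-Lipschitz slope
function `ψ` with `|ψ| ≤ 1`, horizontal separations at most `2ρ`, a cone condition
in the frame at `y` with constants `(λM/50, r/30)` implies the cone condition in
the frame at `x` with constants `(λM/10, r/10)`, provided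
`2λρ(λM/35 + 1) ≤ min{1/2, λM/100}`. -/
theorem cone_change_of_basis (ψ : ℝ → ℝ) (lam : ℝ) (hlam : 1 ≤ lam)
    (hψ1 : ∀ t, |ψ t| ≤ 1)
    (hlip : ∀ s t : ℝ, |ψ s - ψ t| ≤ lam * |s - t|)
    (α ρ M r : ℝ) (hρ : 0 < ρ) (hM : 0 < M) (hr : 0 < r)
    (x y z : ℝ × ℝ) (hxy : |x.1 - y.1| ≤ 2 * ρ) (hxz : |x.1 - z.1| ≤ 2 * ρ)
    (hsmall : 2 * lam * ρ * (lam * M / 35 + 1) ≤ min (1 / 2) (lam * M / 100))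
    (hcone : |dotp (y - z) (1 / Real.sqrt (1 + ψ (y.1 - α) ^ 2),
        ψ (y.1 - α) / Real.sqrt (1 + ψ (y.1 - α) ^ 2))| ≤
      lam * M / 50 * |dotp (y - z) (ψ (y.1 - α) / Real.sqrt (1 + ψ (y.1 - α) ^ 2),
        -1 / Real.sqrt (1 + ψ (y.1 - α) ^ 2))| + r / 30) :
    |dotp (y - z) (1 / Real.sqrt (1 + ψ (x.1 - α) ^ 2),
        ψ (x.1 - α) / Real.sqrt (1 + ψ (x.1 - α) ^ 2))| ≤
      lam * M / 10 * |dotp (y - z) (ψ (x.1 - α) / Real.sqrt (1 + ψ (x.1 - α) ^ 2),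
        -1 / Real.sqrt (1 + ψ (x.1 - α) ^ 2))| + r / 10 :=
  cone_change_of_basis_general ψ lam hlam hlip α ρ M r hM hr x y z hxy hsmall hcone
end
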